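/- On the set $\F$ of triples $(a,s,x)$ with $a\in\A_s$ and $x\in\U_{s^*s}$, the relation $(a,s,x)\sim(a',s',x')$ defined by: $x=x'$ and there exist an idempotent $e\in E(S)$ and $b\in\A_e$ with $b(x)\neq 0$, $se=s'e$, and $((ab-a'b)^*(ab-a'b))(x)=0$, is an equivalence relation. -/

import Mathlib

/-- An inverse semigroup: a semigroup with an involution `star` such that `s (star s) s = s`,
`(star s) s (star s) = star s`, and idempotents commute (this forces `star s` to be the
unique generalized inverse of `s`). -/
class InverseSemigroup (S : Type*) extends Semigroup S, Star S where
  mul_star_mul : ∀ s : S, s * star s * s = s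
  star_mul_star : ∀ s : S, star s * s * star s = star s
  idem_comm : ∀ e f : S, e * e = e → f * f = f → e * f = f * e

/-- The natural partial order on an inverse semigroup: `s ≤ t` iff `s = t (star s) s`. -/
def ISle {S : Type*} [InverseSemigroup S] (s t : S) : Prop := t * (star s * s) = s

/-- A (concrete) Fell bundle over an inverse semigroup `S`: a family of closed subspaces
`fib s` of a C*-algebra `A`, with `fib s * fib t ⊆ fib (s t)`, `(fib s)* ⊆ fib (star s)`,
and `fib s ⊆ fib t` whenever `s ≤ t`.  (The fibers are thus Banach spaces with a
bilinear associative multiplication `𝒜ₛ × 𝒜ₜ → 𝒜ₛₜ`, a conjugate-linear involution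
`𝒜ₛ → 𝒜ₛ*`, isometric inclusions, and the C*-identities hold in `A`.) -/
structure FellBundle (S : Type*) [InverseSemigroup S] (A : Type*)
    [NormedRing A] [StarRing A] [NormedAlgebra ℂ A] where
  fib : S → Submodule ℂ A
  isClosed_fib : ∀ s, IsClosed (fib s : Set A)
  mul_mem : ∀ {s t : S} {a b : A}, a ∈ fib s → b ∈ fib t → a * b ∈ fib (s * t)
  star_mem : ∀ {s : S} {a : A}, a ∈ fib s → star a ∈ fib (star s)
  incl : ∀ {s t : S}, ISle s t → fib s ≤ fib t

variable {S : Type*} [InverseSemigroup S]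
variable {A : Type*} [NormedRing A] [StarRing A] [CStarRing A]
  [NormedAlgebra ℂ A] [StarModule ℂ A] [CompleteSpace A]

/-- A Fell bundle is semi-abelian if each fiber over an idempotent is commutative. -/
def FellBundle.SemiAbelian (𝓑 : FellBundle S A) : Prop :=
  ∀ e : S, e * e = e → ∀ a b : A, a ∈ 𝓑.fib e → b ∈ 𝓑.fib e → a * b = b * a

/-- A Fell bundle is saturated if `fib (s t)` is the closed linear span of
`fib s * fib t`. -/
def FellBundle.Saturated (𝓑 : FellBundle S A) : Prop :=
  ∀ s t : S, (𝓑.fib (s * t) : Set A) ⊆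
    closure (↑(Submodule.span ℂ {x : A | ∃ a ∈ 𝓑.fib s, ∃ b ∈ 𝓑.fib t, x = a * b}) : Set A)

/-- The "restriction to the idempotent semilattice" part of the bundle: the closed linear
span of the fibers over idempotents, a concrete model for `C*(𝓔)`. -/
def FellBundle.EPart (𝓑 : FellBundle S A) : Set A :=
  closure (↑(Submodule.span ℂ (⋃ e ∈ {e : S | e * e = e}, (𝓑.fib e : Set A))) : Set A)

/-- The open support `𝒰ₑ ⊆ X` of the ideal `𝒜ₑ = C₀(𝒰ₑ)`, expressed via the Gelfand
transform `val` of the idempotent part. -/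
def FellBundle.U (𝓑 : FellBundle S A) {X : Type*} (val : A → X → ℂ) (e : S) : Set X :=
  {x : X | ∃ b ∈ 𝓑.fib e, val b x ≠ 0}

/-! Only transitivity needs an argument. Given witnesses `b ∈ 𝒜ₑ` and `c ∈ 𝒜_f`, take
`b c ∈ 𝒜_{ef}`. The Gelfand transform is multiplicative and injective on `𝒜_{ef}`, so
`b c = c b` and `a₁ b c - a₃ b c = (a₁ b - a₂ b) c + (a₂ c - a₃ c) b =: p + q`.
Writing `p = u c`, `p* p = c* (u* u) c` is a product of elements of idempotent fibres, so its
transform at `x` is `c̄(x) (u* u)(x) c(x) = 0`; likewise for `q`. The parallelogram law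
`(p + q)* (p + q) + (p - q)* (p - q) = 2 (p* p + q* q)` holds in the idempotent fibre over
`t* t` (where `p, q ∈ 𝒜ₜ`), and both terms on the left have nonnegative transform, so
`((p + q)* (p + q))(x) = 0`. -/

namespace InverseSemigroup

theorem commute_of_isIdempotentElem {e f : S} (he : IsIdempotentElem e)
    (hf : IsIdempotentElem f) : Commute e f :=
  idem_comm e f he hf

theorem isIdempotentElem_mul {e f : S} (he : IsIdempotentElem e) (hf : IsIdempotentElem f) :
    IsIdempotentElem (e * f) :=
  .mul_of_commute (commute_of_isIdempotentElem he hf) he hf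

theorem isIdempotentElem_star_mul_self (s : S) : IsIdempotentElem (star s * s) := by
  rw [IsIdempotentElem, ← mul_assoc, star_mul_star]

theorem isIdempotentElem_mul_star_self (s : S) : IsIdempotentElem (s * star s) := by
  rw [IsIdempotentElem, ← mul_assoc, mul_star_mul]

theorem star_eq_self_of_isIdempotentElem {e : S} (he : IsIdempotentElem e) : star e = e := by
  have hstar : IsIdempotentElem (star e) := by
    have hfactor : star e = star e * e * (e * star e) := by
      rw [mul_assoc, ← mul_assoc e, he.eq, ← mul_assoc, star_mul_star]
    rw [hfactor]
    exact isIdempotentElem_mul (isIdempotentElem_star_mul_self e)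
      (isIdempotentElem_mul_star_self e)
  have hcomm : e * star e = star e * e := commute_of_isIdempotentElem he hstar
  calc star e = star e * e * star e := (star_mul_star e).symm
    _ = e * (star e * star e) := by rw [← hcomm, mul_assoc]
    _ = e * (star e * e) := by rw [hstar.eq, ← hcomm, ← mul_assoc, he.eq]
    _ = e := by rw [← mul_assoc, mul_star_mul]

theorem mul_mul_eq_of_mul_eq_of_mul_eq {s₁ s₂ s₃ e f : S} (he : IsIdempotentElem e)
    (hf : IsIdempotentElem f) (h₁₂ : s₁ * e = s₂ * e) (h₂₃ : s₂ * f = s₃ * f) :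
    s₁ * (e * f) = s₃ * (e * f) := by
  calc s₁ * (e * f) = s₂ * f * e := by
        rw [← mul_assoc, h₁₂, mul_assoc, (commute_of_isIdempotentElem he hf).eq, ← mul_assoc]
    _ = s₃ * (e * f) := by
        rw [h₂₃, mul_assoc, (commute_of_isIdempotentElem hf he).eq]

end InverseSemigroup

namespace FellBundle

open InverseSemigroup

variable {A : Type*} [NormedRing A] [StarRing A] [NormedAlgebra ℂ A] (𝓑 : FellBundle S A)
  {X : Type*} {val : A → X → ℂ}

theorem star_mem_of_isIdempotentElem {e : S} {a : A} (he : IsIdempotentElem e)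
    (ha : a ∈ 𝓑.fib e) : star a ∈ 𝓑.fib e := by
  simpa only [star_eq_self_of_isIdempotentElem he] using 𝓑.star_mem ha

theorem star_mul_self_mem {s : S} {a : A} (ha : a ∈ 𝓑.fib s) :
    star a * a ∈ 𝓑.fib (star s * s) :=
  𝓑.mul_mem (𝓑.star_mem ha) ha

theorem val_zero (hval_add : ∀ {e : S} {a b : A}, e * e = e → a ∈ 𝓑.fib e → b ∈ 𝓑.fib e →
      ∀ x, val (a + b) x = val a x + val b x)
    {e : S} (he : IsIdempotentElem e) (x : X) : val 0 x = 0 := by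
  simpa using hval_add he (zero_mem _) (zero_mem _) x

theorem commute_of_mem_fib
    (hval_mul : ∀ {e f : S} {a b : A}, e * e = e → f * f = f → a ∈ 𝓑.fib e → b ∈ 𝓑.fib f →
      ∀ x, val (a * b) x = val a x * val b x)
    (hval_inj : ∀ {e : S} {a b : A}, e * e = e → a ∈ 𝓑.fib e → b ∈ 𝓑.fib e →
      (∀ x, val a x = val b x) → a = b)
    {e f : S} {b c : A} (he : IsIdempotentElem e) (hb : b ∈ 𝓑.fib e)
    (hf : IsIdempotentElem f) (hc : c ∈ 𝓑.fib f) : Commute b c := by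
  have hcb : c * b ∈ 𝓑.fib (e * f) := by
    rw [(commute_of_isIdempotentElem he hf).eq]
    exact 𝓑.mul_mem hc hb
  refine hval_inj (isIdempotentElem_mul he hf) (𝓑.mul_mem hb hc) hcb fun x => ?_
  rw [hval_mul he hf hb hc, hval_mul hf he hc hb, mul_comm]

theorem val_star_mul_self_mul_right_eq_zero
    (hval_mul : ∀ {e f : S} {a b : A}, e * e = e → f * f = f → a ∈ 𝓑.fib e → b ∈ 𝓑.fib f →
      ∀ x, val (a * b) x = val a x * val b x)
    {s f : S} {a c : A} (ha : a ∈ 𝓑.fib s) (hf : IsIdempotentElem f) (hc : c ∈ 𝓑.fib f)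
    {x : X} (h : val (star a * a) x = 0) : val (star (a * c) * (a * c)) x = 0 := by
  have hg := isIdempotentElem_star_mul_self s
  rw [star_mul, mul_assoc, ← mul_assoc (star a),
    hval_mul hf (isIdempotentElem_mul hg hf) (𝓑.star_mem_of_isIdempotentElem hf hc)
      (𝓑.mul_mem (𝓑.star_mul_self_mem ha) hc),
    hval_mul hg hf (𝓑.star_mul_self_mem ha) hc, h, zero_mul, mul_zero]

theorem val_star_mul_self_add_eq_zero
    (hval_add : ∀ {e : S} {a b : A}, e * e = e → a ∈ 𝓑.fib e → b ∈ 𝓑.fib e →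
      ∀ x, val (a + b) x = val a x + val b x)
    (hval_pos : ∀ {s : S} {a : A}, a ∈ 𝓑.fib s →
      ∀ x, (val (star a * a) x).im = 0 ∧ 0 ≤ (val (star a * a) x).re)
    {t : S} {p q : A} (hp : p ∈ 𝓑.fib t) (hq : q ∈ 𝓑.fib t) {x : X}
    (hp0 : val (star p * p) x = 0) (hq0 : val (star q * q) x = 0) :
    val (star (p + q) * (p + q)) x = 0 := by
  have hg := isIdempotentElem_star_mul_self t
  have hP := 𝓑.star_mul_self_mem hp
  have hQ := 𝓑.star_mul_self_mem hq
  have hparallelogram : star (p + q) * (p + q) + star (p - q) * (p - q)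
      = (star p * p + star q * q) + (star p * p + star q * q) := by
    simp only [star_add, star_sub]
    noncomm_ring
  have hsum : val (star (p + q) * (p + q)) x + val (star (p - q) * (p - q)) x = 0 := by
    rw [← hval_add hg (𝓑.star_mul_self_mem (add_mem hp hq))
        (𝓑.star_mul_self_mem (sub_mem hp hq)), hparallelogram,
      hval_add hg (add_mem hP hQ) (add_mem hP hQ), hval_add hg hP hQ, hp0, hq0]
    simp
  obtain ⟨him, hre⟩ := hval_pos (add_mem hp hq) x
  have hre' := (hval_pos (sub_mem hp hq) x).2
  have hsum_re := congrArg Complex.re hsum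
  rw [Complex.add_re, Complex.zero_re] at hsum_re
  exact Complex.ext (by rw [Complex.zero_re]; linarith) him

theorem val_star_mul_self_sub_eq_zero_trans
    (hval_add : ∀ {e : S} {a b : A}, e * e = e → a ∈ 𝓑.fib e → b ∈ 𝓑.fib e →
      ∀ x, val (a + b) x = val a x + val b x)
    (hval_mul : ∀ {e f : S} {a b : A}, e * e = e → f * f = f → a ∈ 𝓑.fib e → b ∈ 𝓑.fib f →
      ∀ x, val (a * b) x = val a x * val b x)
    (hval_inj : ∀ {e : S} {a b : A}, e * e = e → a ∈ 𝓑.fib e → b ∈ 𝓑.fib e →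
      (∀ x, val a x = val b x) → a = b)
    (hval_pos : ∀ {s : S} {a : A}, a ∈ 𝓑.fib s →
      ∀ x, (val (star a * a) x).im = 0 ∧ 0 ≤ (val (star a * a) x).re)
    {s₁ s₂ s₃ e f : S} {a₁ a₂ a₃ b c : A} (ha₁ : a₁ ∈ 𝓑.fib s₁) (ha₂ : a₂ ∈ 𝓑.fib s₂)
    (ha₃ : a₃ ∈ 𝓑.fib s₃) (he : IsIdempotentElem e) (hb : b ∈ 𝓑.fib e)
    (hf : IsIdempotentElem f) (hc : c ∈ 𝓑.fib f)
    (hs₁₂ : s₁ * e = s₂ * e) (hs₂₃ : s₂ * f = s₃ * f) {x : X}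
    (h₁₂ : val (star (a₁ * b - a₂ * b) * (a₁ * b - a₂ * b)) x = 0)
    (h₂₃ : val (star (a₂ * c - a₃ * c) * (a₂ * c - a₃ * c)) x = 0) :
    val (star (a₁ * (b * c) - a₃ * (b * c)) * (a₁ * (b * c) - a₃ * (b * c))) x = 0 := by
  have hu : a₁ * b - a₂ * b ∈ 𝓑.fib (s₁ * e) :=
    sub_mem (𝓑.mul_mem ha₁ hb) (hs₁₂ ▸ 𝓑.mul_mem ha₂ hb)
  have hv : a₂ * c - a₃ * c ∈ 𝓑.fib (s₂ * f) :=
    sub_mem (𝓑.mul_mem ha₂ hc) (hs₂₃ ▸ 𝓑.mul_mem ha₃ hc)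
  have hq : (a₂ * c - a₃ * c) * b ∈ 𝓑.fib (s₁ * e * f) := by
    have hs : s₂ * f * e = s₁ * e * f := by
      rw [mul_assoc, (commute_of_isIdempotentElem hf he).eq, ← mul_assoc, hs₁₂]
    exact hs ▸ 𝓑.mul_mem hv hb
  have hsplit :
      a₁ * (b * c) - a₃ * (b * c) = (a₁ * b - a₂ * b) * c + (a₂ * c - a₃ * c) * b := by
    simp only [sub_mul, mul_assoc, (𝓑.commute_of_mem_fib hval_mul hval_inj he hb hf hc).eq]
    abel
  rw [hsplit]
  exact 𝓑.val_star_mul_self_add_eq_zero hval_add hval_pos (𝓑.mul_mem hu hc) hq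
    (𝓑.val_star_mul_self_mul_right_eq_zero hval_mul hu hf hc h₁₂)
    (𝓑.val_star_mul_self_mul_right_eq_zero hval_mul hv he hb h₂₃)

end FellBundle

theorem stmt_13_general (𝓑 : FellBundle S A)
    {X : Type*} (val : A → X → ℂ)
    (hval_add : ∀ {e : S} {a b : A}, e * e = e → a ∈ 𝓑.fib e → b ∈ 𝓑.fib e →
      ∀ x, val (a + b) x = val a x + val b x)
    (hval_mul : ∀ {e f : S} {a b : A}, e * e = e → f * f = f → a ∈ 𝓑.fib e → b ∈ 𝓑.fib f →
      ∀ x, val (a * b) x = val a x * val b x)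
    (hval_inj : ∀ {e : S} {a b : A}, e * e = e → a ∈ 𝓑.fib e → b ∈ 𝓑.fib e →
      (∀ x, val a x = val b x) → a = b)
    (hval_pos : ∀ {s : S} {a : A}, a ∈ 𝓑.fib s →
      ∀ x, (val (star a * a) x).im = 0 ∧ 0 ≤ (val (star a * a) x).re)
    :
    Equivalence (fun (p q : {p : A × S × X //
        p.1 ∈ 𝓑.fib p.2.1 ∧ p.2.2 ∈ 𝓑.U val (star p.2.1 * p.2.1)}) =>
      p.1.2.2 = q.1.2.2 ∧ ∃ (e : S) (b : A), e * e = e ∧ b ∈ 𝓑.fib e ∧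
        val b p.1.2.2 ≠ 0 ∧ p.1.2.1 * e = q.1.2.1 * e ∧
        val (star (p.1.1 * b - q.1.1 * b) * (p.1.1 * b - q.1.1 * b)) p.1.2.2 = 0) := by
  refine ⟨?_, ?_, ?_⟩
  · rintro ⟨⟨a, s, x⟩, -, b, hb, hbx⟩
    have hs := InverseSemigroup.isIdempotentElem_star_mul_self s
    refine ⟨rfl, star s * s, b, hs, hb, hbx, rfl, ?_⟩
    rw [sub_self, mul_zero]
    exact 𝓑.val_zero hval_add hs x
  · rintro p q ⟨hpq, e, b, he, hb, hbx, hs, h⟩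
    refine ⟨hpq.symm, e, b, he, hb, hpq ▸ hbx, hs.symm, ?_⟩
    rwa [← hpq, ← neg_sub, star_neg, neg_mul_neg]
  · rintro p q r ⟨hpq, e, b, he, hb, hbx, hs₁₂, h₁₂⟩ ⟨hqr, f, c, hf, hc, hcx, hs₂₃, h₂₃⟩
    rw [← hpq] at hcx h₂₃
    refine ⟨hpq.trans hqr, e * f, b * c,
      InverseSemigroup.isIdempotentElem_mul he hf, 𝓑.mul_mem hb hc, ?_,
      InverseSemigroup.mul_mul_eq_of_mul_eq_of_mul_eq he hf hs₁₂ hs₂₃,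
      𝓑.val_star_mul_self_sub_eq_zero_trans hval_add hval_mul hval_inj hval_pos
        p.2.1 q.2.1 r.2.1 he hb hf hc hs₁₂ hs₂₃ h₁₂ h₂₃⟩
    rw [hval_mul he hf hb hc]
    exact mul_ne_zero hbx hcx

/-- On the set `𝔉` of triples `(a, s, x)` with `a ∈ 𝒜ₛ` and
`x ∈ 𝒰_{s*s}`, the relation `(a,s,x) ∼ (a',s',x')` defined by: `x = x'` and there exist an
idempotent `e ∈ E(S)` and `b ∈ 𝒜ₑ` with `b(x) ≠ 0`, `s e = s' e`, and
`((ab - a'b)* (ab - a'b))(x) = 0`, is an equivalence relation. -/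
theorem stmt_13 (𝓑 : FellBundle S A) (hsat : 𝓑.Saturated) (hsab : 𝓑.SemiAbelian)
    {X : Type*} (val : A → X → ℂ)
    (hval_add : ∀ {e : S} {a b : A}, e * e = e → a ∈ 𝓑.fib e → b ∈ 𝓑.fib e →
      ∀ x, val (a + b) x = val a x + val b x)
    (hval_smul : ∀ {e : S} {a : A} (c : ℂ), e * e = e → a ∈ 𝓑.fib e →
      ∀ x, val (c • a) x = c * val a x)
    (hval_mul : ∀ {e f : S} {a b : A}, e * e = e → f * f = f → a ∈ 𝓑.fib e → b ∈ 𝓑.fib f →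
      ∀ x, val (a * b) x = val a x * val b x)
    (hval_star : ∀ {e : S} {a : A}, e * e = e → a ∈ 𝓑.fib e →
      ∀ x, val (star a) x = (starRingEnd ℂ) (val a x))
    (hval_inj : ∀ {e : S} {a b : A}, e * e = e → a ∈ 𝓑.fib e → b ∈ 𝓑.fib e →
      (∀ x, val a x = val b x) → a = b)
    (hval_sep : ∀ x y : X,
      (∀ (e : S) (b : A), e * e = e → b ∈ 𝓑.fib e → val b x = val b y) → x = y)
    (hval_pos : ∀ {s : S} {a : A}, a ∈ 𝓑.fib s →
      ∀ x, (val (star a * a) x).im = 0 ∧ 0 ≤ (val (star a * a) x).re)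
    :
    Equivalence (fun (p q : {p : A × S × X //
        p.1 ∈ 𝓑.fib p.2.1 ∧ p.2.2 ∈ 𝓑.U val (star p.2.1 * p.2.1)}) =>
      p.1.2.2 = q.1.2.2 ∧ ∃ (e : S) (b : A), e * e = e ∧ b ∈ 𝓑.fib e ∧
        val b p.1.2.2 ≠ 0 ∧ p.1.2.1 * e = q.1.2.1 * e ∧
        val (star (p.1.1 * b - q.1.1 * b) * (p.1.1 * b - q.1.1 * b)) p.1.2.2 = 0) :=
  stmt_13_general 𝓑 val hval_add hval_mul hval_inj hval_pos
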